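/- The importance-weighted bound converges to log p(y): if w^k are i.i.d. nonnegative integrable random variables with mean p(y) > 0 and the weights are bounded (or uniformly integrable in the sense required for L1 convergence of averages), then E[log((1/K) Σ_{k=1}^K w^k)] → log p(y) as K → ∞. -/

import Mathlib

/-!
Under the proposal `q`, the weights `W = p / q` are i.i.d. with mean `p(y)` and some variance
`σ²`, so their sample mean `A_K` has mean `p(y)` and variance `σ² / K`. With `t = A_K / p(y)`,
the elementary bounds `0 ≤ t - 1 - log t ≤ (t - 1)² / t` and `A_K ≥ c` give
`|E[log A_K] - log p(y)| ≤ σ² / (K c p(y))`, which tends to `0`. The expectation under `q` in the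
statement is an integral against `μ^K` with density `∏ q(z_k)`, i.e. against the product of
copies of `μ.withDensity q`.
-/

open MeasureTheory Filter ProbabilityTheory

namespace Real

lemma sub_one_sub_log_le_sq_div {t : ℝ} (ht : 0 < t) : t - 1 - log t ≤ (t - 1) ^ 2 / t := by
  have h := one_sub_inv_le_log_of_pos ht
  have : (t - 1) ^ 2 / t = t - 2 + t⁻¹ := by field_simp; ring
  linarith

lemma abs_log_sub_log_sub_div_le {a b c : ℝ} (hc : 0 < c) (hca : c ≤ a) (hb : 0 < b) :
    |log a - log b - (a - b) / b| ≤ (a - b) ^ 2 / (c * b) := by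
  have ha : 0 < a := hc.trans_le hca
  have ht : 0 < a / b := div_pos ha hb
  have hlog : log a - log b = log (a / b) := (log_div ha.ne' hb.ne').symm
  have hlin : (a - b) / b = a / b - 1 := by field_simp
  have hsq : (a / b - 1) ^ 2 / (a / b) = (a - b) ^ 2 / (a * b) := by field_simp
  rw [hlog, hlin, abs_sub_comm, abs_of_nonneg (by linarith [log_le_sub_one_of_pos ht])]
  calc a / b - 1 - log (a / b) ≤ (a - b) ^ 2 / (a * b) := hsq ▸ sub_one_sub_log_le_sq_div ht
    _ ≤ (a - b) ^ 2 / (c * b) := by gcongr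

end Real

noncomputable def sampleMean {Ω : Type*} (X : Ω → ℝ) (K : ℕ) (ω : Fin K → Ω) : ℝ :=
  (1 / K : ℝ) * ∑ k, X (ω k)

section SampleMean

variable {Ω : Type*} [MeasurableSpace Ω] {ν : Measure Ω} [IsProbabilityMeasure ν] {X : Ω → ℝ}
  {K : ℕ} {c : ℝ}

lemma integral_sampleMean (hX : Integrable X ν) (hK : K ≠ 0) :
    ∫ ω, sampleMean X K ω ∂(Measure.pi fun _ => ν) = ∫ x, X x ∂ν := by
  unfold sampleMean
  have hsum : ∫ ω, ∑ k : Fin K, X (ω k) ∂(Measure.pi fun _ => ν) = ∑ _k : Fin K, ∫ x, X x ∂ν := by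
    rw [integral_finsetSum _ fun k _ => integrable_comp_eval hX]
    exact Finset.sum_congr rfl fun k _ => integral_comp_eval hX.aestronglyMeasurable
  rw [integral_const_mul, hsum, Finset.sum_const, Finset.card_univ, Fintype.card_fin,
    nsmul_eq_mul]
  field_simp

lemma memLp_sampleMean (hX : MemLp X 2 ν) : MemLp (sampleMean X K) 2 (Measure.pi fun _ => ν) := by
  have h := (memLp_finsetSum' Finset.univ fun k _ =>
    hX.comp_measurePreserving (measurePreserving_eval (fun _ : Fin K => ν) k)).const_mul (1 / K : ℝ)
  convert h using 2 with ω
  simp [sampleMean]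

lemma variance_sampleMean (hX : MemLp X 2 ν) :
    Var[sampleMean X K; Measure.pi fun _ => ν] = Var[X; ν] / K := by
  have hsum := variance_sum_pi (μ := fun _ : Fin K => ν) (X := fun _ => X) fun _ => hX
  have hA : sampleMean X K =
      fun ω => (1 / K : ℝ) * (∑ k : Fin K, fun ω : Fin K → Ω => X (ω k)) ω := by
    ext ω; simp [sampleMean]
  rw [hA, variance_const_mul, hsum]
  simp only [Finset.sum_const, Finset.card_univ, Fintype.card_fin, nsmul_eq_mul]
  rcases eq_or_ne K 0 with rfl | hK
  · simp
  · field_simp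

lemma ae_le_sampleMean (hXc : ∀ᵐ x ∂ν, c ≤ X x) (hK : K ≠ 0) :
    ∀ᵐ ω ∂(Measure.pi fun _ => ν), c ≤ sampleMean X K ω := by
  have hall : ∀ᵐ ω ∂(Measure.pi fun _ => ν), ∀ k : Fin K, c ≤ X (ω k) :=
    ae_all_iff.2 fun k => (Measure.quasiMeasurePreserving_eval (fun _ => ν) k).ae hXc
  filter_upwards [hall] with ω hω
  have hsum : ∑ _k : Fin K, c ≤ ∑ k, X (ω k) := Finset.sum_le_sum fun k _ => hω k
  rw [Finset.sum_const, Finset.card_univ, Fintype.card_fin, nsmul_eq_mul] at hsum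
  have hK' : (0 : ℝ) < K := by positivity
  unfold sampleMean
  rw [one_div, ← div_eq_inv_mul, le_div_iff₀ hK']
  linarith

theorem abs_integral_log_sampleMean_sub_log_le (hX : MemLp X 2 ν) (hc : 0 < c)
    (hXc : ∀ᵐ x ∂ν, c ≤ X x) (hK : K ≠ 0) :
    |∫ ω, Real.log (sampleMean X K ω) ∂(Measure.pi fun _ => ν) - Real.log (∫ x, X x ∂ν)|
      ≤ Var[X; ν] / K / (c * ∫ x, X x ∂ν) := by
  set π := Measure.pi fun _ : Fin K => ν
  set m := ∫ x, X x ∂ν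
  set A := sampleMean X K
  have hm : 0 < m := by
    refine hc.trans_le ?_
    simpa using integral_mono_ae (integrable_const c) (hX.integrable one_le_two) hXc
  have hA : MemLp A 2 π := memLp_sampleMean hX
  have hAm : ∫ ω, A ω ∂π = m := integral_sampleMean (hX.integrable one_le_two) hK
  set D : (Fin K → Ω) → ℝ := fun ω => Real.log (A ω) - Real.log m - (A ω - m) / m
  have hD : ∀ᵐ ω ∂π, ‖D ω‖ ≤ (A ω - m) ^ 2 / (c * m) := by
    filter_upwards [ae_le_sampleMean hXc hK] with ω hω
    exact Real.abs_log_sub_log_sub_div_le hc hω hm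
  have hsq_int : Integrable (fun ω => (A ω - m) ^ 2) π := (hA.sub (memLp_const m)).integrable_sq
  have hlin_int : Integrable (fun ω => (A ω - m) / m) π :=
    ((hA.integrable one_le_two).sub (integrable_const m)).div_const m
  have hD_meas : AEStronglyMeasurable D π :=
    (((Real.measurable_log.comp_aemeasurable hA.aemeasurable).sub_const _).sub
      ((hA.aemeasurable.sub_const m).div_const m)).aestronglyMeasurable
  have hD_int : Integrable D π := (hsq_int.div_const _).mono' hD_meas hD
  have hlin : ∫ ω, (A ω - m) / m ∂π = 0 := by
    rw [integral_div, integral_sub (hA.integrable one_le_two) (integrable_const m), hAm]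
    simp
  have hsplit : ∫ ω, Real.log (A ω) ∂π - Real.log m = ∫ ω, D ω ∂π := by
    have : (fun ω => Real.log (A ω)) = fun ω => (D ω + (A ω - m) / m) + Real.log m := by
      funext ω; simp only [D]; ring
    rw [this, integral_add (f := fun ω => D ω + (A ω - m) / m) (hD_int.add hlin_int)
      (integrable_const _), integral_add hD_int hlin_int, hlin]
    simp
  have hvar : ∫ ω, (A ω - m) ^ 2 ∂π = Var[X; ν] / K := by
    rw [← variance_sampleMean hX, variance_eq_integral hA.aemeasurable, hAm]
  calc |∫ ω, Real.log (A ω) ∂π - Real.log m| = ‖∫ ω, D ω ∂π‖ := by rw [hsplit, Real.norm_eq_abs]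
    _ ≤ ∫ ω, (A ω - m) ^ 2 / (c * m) ∂π := norm_integral_le_of_norm_le (hsq_int.div_const _) hD
    _ = Var[X; ν] / K / (c * m) := by rw [integral_div, hvar]

theorem tendsto_integral_log_sampleMean (hX : MemLp X 2 ν) (hc : 0 < c)
    (hXc : ∀ᵐ x ∂ν, c ≤ X x) :
    Tendsto (fun K : ℕ => ∫ ω, Real.log (sampleMean X K ω) ∂(Measure.pi fun _ => ν)) atTop
      (nhds (Real.log (∫ x, X x ∂ν))) := by
  rw [tendsto_iff_norm_sub_tendsto_zero]
  have hbound := (tendsto_const_div_atTop_nhds_zero_nat Var[X; ν]).div_const (c * ∫ x, X x ∂ν)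
  rw [zero_div] at hbound
  refine squeeze_zero' (Eventually.of_forall fun _ => norm_nonneg _) ?_ hbound
  filter_upwards [eventually_ne_atTop 0] with K hK
  exact abs_integral_log_sampleMean_sub_log_le hX hc hXc hK

end SampleMean

section ProductDensity

variable {ι : Type*} [Fintype ι] {α : ι → Type*} [∀ i, MeasurableSpace (α i)]
  {μ : ∀ i, Measure (α i)} [∀ i, SigmaFinite (μ i)] {q : ∀ i, α i → ℝ}

lemma MeasureTheory.Measure.pi_withDensity_ofReal (hq : ∀ i, Integrable (q i) (μ i))
    (hq0 : ∀ i x, 0 ≤ q i x) :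
    Measure.pi (fun i => (μ i).withDensity fun x => ENNReal.ofReal (q i x)) =
      (Measure.pi μ).withDensity fun x => ENNReal.ofReal (∏ i, q i (x i)) := by
  refine Measure.pi_eq fun s hs => ?_
  rw [withDensity_apply _ (MeasurableSet.univ_pi hs), Measure.restrict_pi_pi,
    ← ofReal_integral_eq_lintegral_ofReal (Integrable.fintype_prod_dep fun i => (hq i).restrict)
      (ae_of_all _ fun x => Finset.prod_nonneg fun i _ => hq0 i (x i)),
    integral_fintype_prod_eq_prod,
    ENNReal.ofReal_prod_of_nonneg fun i _ => integral_nonneg (hq0 i)]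
  refine Finset.prod_congr rfl fun i _ => ?_
  rw [withDensity_apply _ (hs i),
    ofReal_integral_eq_lintegral_ofReal (hq i).restrict (ae_of_all _ (hq0 i))]

lemma integral_pi_withDensity_ofReal (hq : ∀ i, Integrable (q i) (μ i))
    (hq0 : ∀ i x, 0 ≤ q i x) (g : (∀ i, α i) → ℝ) :
    ∫ x, g x ∂Measure.pi (fun i => (μ i).withDensity fun x => ENNReal.ofReal (q i x)) =
      ∫ x, (∏ i, q i (x i)) * g x ∂Measure.pi μ := by
  have hdens : AEMeasurable (fun x => ∏ i, q i (x i)) (Measure.pi μ) :=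
    Finset.aemeasurable_fun_prod _ fun i _ =>
      (hq i).aemeasurable.comp_quasiMeasurePreserving (Measure.quasiMeasurePreserving_eval μ i)
  rw [Measure.pi_withDensity_ofReal hq hq0, integral_withDensity_eq_integral_toReal_smul₀
    hdens.ennreal_ofReal (ae_of_all _ fun _ => ENNReal.ofReal_lt_top)]
  simp_rw [ENNReal.toReal_ofReal (Finset.prod_nonneg fun i _ => hq0 i _), smul_eq_mul]

end ProductDensity

theorem stmt4_general {Z : Type*} [MeasurableSpace Z] (μ : Measure Z) [SigmaFinite μ]
    (q p : Z → ℝ) (py c C : ℝ)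
    (hq0 : ∀ z, 0 ≤ q z) (hq1 : ∫ z, q z ∂μ = 1)
    (hpypos : 0 < py)
    (hw : ∫ z, q z * (p z / q z) ∂μ = py)
    (hc : 0 < c)
    (hbdd : ∀ᵐ z ∂μ, q z ≠ 0 → c ≤ p z / q z ∧ p z / q z ≤ C) :
    Tendsto (fun K : ℕ =>
      ∫ zs : Fin K → Z,
        (∏ k, q (zs k)) * Real.log (((1 : ℝ) / K) * ∑ k, p (zs k) / q (zs k))
        ∂(Measure.pi fun _ => μ))
      atTop (nhds (Real.log py)) := by
  have hq : Integrable q μ := .of_integral_ne_zero (by simp [hq1])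
  set ν := μ.withDensity fun z => ENNReal.ofReal (q z)
  have : IsProbabilityMeasure ν := ⟨by
    rw [withDensity_apply _ MeasurableSet.univ, Measure.restrict_univ,
      ← ofReal_integral_eq_lintegral_ofReal hq (ae_of_all _ hq0), hq1, ENNReal.ofReal_one]⟩
  set W : Z → ℝ := fun z => p z / q z
  have hmean : ∫ z, W z ∂ν = py := by
    rw [integral_withDensity_eq_integral_toReal_smul₀ hq.aemeasurable.ennreal_ofReal
      (ae_of_all _ fun _ => ENNReal.ofReal_lt_top)]
    simpa [ENNReal.toReal_ofReal (hq0 _)] using hw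
  have hWν : ∀ᵐ z ∂ν, c ≤ W z ∧ W z ≤ C := by
    refine (ae_withDensity_iff' hq.aemeasurable.ennreal_ofReal).2 (hbdd.mono fun z hz hqz => hz ?_)
    exact (ENNReal.ofReal_ne_zero_iff.1 hqz).ne'
  have hW : MemLp W 2 ν := by
    refine MemLp.of_bound (Integrable.of_integral_ne_zero (by rw [hmean]; exact hpypos.ne')).1 C ?_
    filter_upwards [hWν] with z hz
    rw [Real.norm_eq_abs, abs_le]
    constructor <;> linarith [hz.1, hz.2]
  have hlim := tendsto_integral_log_sampleMean hW hc (hWν.mono fun _ h => h.1)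
  rw [hmean] at hlim
  refine hlim.congr fun K => ?_
  exact integral_pi_withDensity_ofReal (fun _ => hq) (fun _ => hq0) _

/-- The IW bound converges to log p(y) as K → ∞, assuming the weights
    w = p/q are (q-almost surely) bounded between c > 0 and C. -/
theorem stmt4 {Z : Type*} [MeasurableSpace Z] (μ : Measure Z) [SigmaFinite μ]
    (q p : Z → ℝ) (py c C : ℝ)
    (hq0 : ∀ z, 0 ≤ q z) (hq1 : ∫ z, q z ∂μ = 1)
    (hp0 : ∀ z, 0 ≤ p z)
    (hpy : ∫ z, p z ∂μ = py) (hpypos : 0 < py)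
    (hw : ∫ z, q z * (p z / q z) ∂μ = py)
    (hc : 0 < c)
    (hbdd : ∀ᵐ z ∂μ, q z ≠ 0 → c ≤ p z / q z ∧ p z / q z ≤ C) :
    Tendsto (fun K : ℕ =>
      ∫ zs : Fin K → Z,
        (∏ k, q (zs k)) * Real.log (((1 : ℝ) / K) * ∑ k, p (zs k) / q (zs k))
        ∂(Measure.pi fun _ => μ))
      atTop (nhds (Real.log py)) :=
  stmt4_general μ q p py c C hq0 hq1 hpypos hw hc hbdd
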